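/- Let N ≥ 4 be an integer such that N − 1 is prime. Then the polynomial Q_N(x) = Σ_{n=0}^{N} (N!/n!) x^n is irreducible over ℚ. -/

import Mathlib

open Polynomial

/-- `Qpoly N = ∑_{n=0}^{N} (N!/n!) xⁿ`, `N!` times the truncated exponential. -/
noncomputable def Qpoly (N : ℕ) : Polynomial ℤ :=
  ∑ n ∈ Finset.range (N + 1), C ((N.factorial / n.factorial : ℕ) : ℤ) * X ^ n

lemma Qpoly_coeff (N k : ℕ) :
    (Qpoly N).coeff k = if k ≤ N then ((N.factorial / k.factorial : ℕ) : ℤ) else 0 := by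
  unfold Qpoly
  rw [finset_sum_coeff]
  simp only [coeff_C_mul, coeff_X_pow]
  by_cases h : k ≤ N
  · rw [if_pos h, Finset.sum_eq_single k]
    · simp
    · intro b _ hb; simp [Ne.symm hb]
    · intro hk; exact absurd (Finset.mem_range.mpr (by omega)) hk
  · rw [if_neg h]
    apply Finset.sum_eq_zero
    intro b hb
    simp only [Finset.mem_range, Nat.lt_succ_iff] at hb
    rw [if_neg (by omega), mul_zero]

lemma Qpoly_coeff_natDegree_self (N : ℕ) : (Qpoly N).coeff N = 1 := by
  rw [Qpoly_coeff]; simp [Nat.div_self N.factorial_pos]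

lemma Qpoly_natDegree (N : ℕ) : (Qpoly N).natDegree = N := by
  apply le_antisymm
  · apply natDegree_le_iff_coeff_eq_zero.mpr
    intro k hk
    rw [Qpoly_coeff]
    simp [Nat.not_le.mpr hk]
  · apply le_natDegree_of_ne_zero
    rw [Qpoly_coeff_natDegree_self]; exact one_ne_zero

lemma Qpoly_monic (N : ℕ) : (Qpoly N).Monic := by
  unfold Monic leadingCoeff
  rw [Qpoly_natDegree, Qpoly_coeff_natDegree_self]

lemma dvd_factorial_div {n m N : ℕ} (h1 : n < m) (h2 : m ≤ N) :
    m ∣ N.factorial / n.factorial := by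
  have hd1 : n.factorial ∣ (m-1).factorial := Nat.factorial_dvd_factorial (by omega)
  have hd2 : m.factorial ∣ N.factorial := Nat.factorial_dvd_factorial h2
  have hd3 : n.factorial ∣ m.factorial := Nat.factorial_dvd_factorial (by omega)
  have e1 : N.factorial / n.factorial
      = (m.factorial / n.factorial) * (N.factorial / m.factorial) := by
    rw [Nat.div_mul_div_comm hd3 hd2, mul_comm m.factorial,
      Nat.mul_div_mul_right _ _ m.factorial_pos]
  have e2 : m.factorial / n.factorial = m * ((m-1).factorial / n.factorial) := by
    have : m.factorial = m * (m-1).factorial := by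
      conv_lhs => rw [show m = (m-1)+1 by omega]
      rw [Nat.factorial_succ]; congr 1; omega
    rw [this, Nat.mul_div_assoc _ hd1]
  rw [e1, e2, mul_assoc]
  exact Dvd.intro _ rfl

lemma sq_not_dvd_factorial {N : ℕ} (hN : 4 ≤ N) (hp : (N-1).Prime) :
    ¬ (N-1)*(N-1) ∣ N.factorial := by
  set p := N - 1 with hpdef
  intro hdvd
  have e : N.factorial = p * (N * (N-2).factorial) := by
    conv_lhs => rw [show N = (N-1)+1 by omega]
    rw [Nat.factorial_succ]
    conv_lhs => rw [show N - 1 = (N-2)+1 by omega]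
    rw [Nat.factorial_succ]
    have h2 := hp.two_le
    rw [show N - 2 + 1 + 1 = N by omega, show (N-2)+1 = N-1 by omega, ← hpdef]
    ring
  rw [e] at hdvd
  have h1 : p ∣ N * (N-2).factorial :=
    (mul_dvd_mul_iff_left (show p ≠ 0 by have := hp.two_le; omega)).mp hdvd
  rcases hp.dvd_mul.mp h1 with h | h
  · have h2 : p ∣ N - p := Nat.dvd_sub h (dvd_refl p)
    have : N - p = 1 := by omega
    rw [this] at h2
    have := Nat.le_of_dvd one_pos h2
    have := hp.two_le
    omega
  · have := (Nat.Prime.dvd_factorial hp).mp h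
    omega

lemma factorization_factorial_le {q n : ℕ} (hq : q.Prime) (hn : 1 ≤ n) :
    (n.factorial).factorization q ≤ n - 1 := by
  haveI : Fact q.Prime := ⟨hq⟩
  have h1 : (q - 1) * padicValNat q (n.factorial) = n - (q.digits n).sum :=
    sub_one_mul_padicValNat_factorial n
  have hne : q.digits n ≠ [] := Nat.digits_ne_nil_iff_ne_zero.mpr (by omega)
  have hlast := Nat.getLast_digit_ne_zero q (show n ≠ 0 by omega)
  have hmem := List.getLast_mem hne
  have hs : 1 ≤ (q.digits n).sum := by
    have := List.single_le_sum (fun (x:ℕ) _ => Nat.zero_le x) _ hmem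
    omega
  have hf : (n.factorial).factorization q = padicValNat q n.factorial :=
    Nat.factorization_def _ hq
  have hq2 := hq.two_le
  have hle : padicValNat q n.factorial ≤ (q-1) * padicValNat q n.factorial :=
    Nat.le_mul_of_pos_left _ (by omega)
  omega

lemma Qpoly_eval (N : ℕ) (m : ℤ) :
    (Qpoly N).eval m = ∑ n ∈ Finset.range (N + 1), ((N.factorial / n.factorial : ℕ) : ℤ) * m ^ n := by
  unfold Qpoly
  rw [eval_finset_sum]
  simp

lemma Qpoly_eval_ne_zero {N : ℕ} (hN : 2 ≤ N) (m : ℤ) : (Qpoly N).eval m ≠ 0 := by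
  intro h0
  rcases Nat.lt_or_ge m.natAbs 2 with hm | hm
  · -- |m| ≤ 1
    rcases Nat.lt_or_ge m.natAbs 1 with hm1 | hm1
    · -- m = 0
      have hm0 : m = 0 := by omega
      rw [hm0, Qpoly_eval] at h0
      rw [Finset.sum_eq_single 0 (by intro b _ hb; simp [zero_pow hb]) (by simp)] at h0
      simp at h0
      exact N.factorial_ne_zero h0
    · -- m = ± 1
      have hu : IsUnit m := by
        rcases Int.natAbs_eq m with h | h <;> rw [h] <;>
          simp [show m.natAbs = 1 by omega]
      rw [Qpoly_eval, Finset.sum_range_succ] at h0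
      have hdvd : (N : ℤ) ∣ ∑ n ∈ Finset.range N, ((N.factorial / n.factorial : ℕ) : ℤ) * m ^ n := by
        apply Finset.dvd_sum
        intro n hn
        apply Dvd.dvd.mul_right
        exact_mod_cast Int.natCast_dvd_natCast.mpr
          (dvd_factorial_div (Finset.mem_range.mp hn) le_rfl)
      have hNN : ((N.factorial / N.factorial : ℕ) : ℤ) = 1 := by
        rw [Nat.div_self N.factorial_pos]; norm_num
      rw [hNN, one_mul] at h0
      have : (N : ℤ) ∣ m ^ N := by
        have : m ^ N = -∑ n ∈ Finset.range N, ((N.factorial / n.factorial : ℕ) : ℤ) * m ^ n := by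
          linarith
        rw [this]
        exact hdvd.neg_right
      have hUnit : IsUnit ((N : ℤ)) := isUnit_of_dvd_unit this (hu.pow N)
      rw [Int.isUnit_iff] at hUnit
      omega
  · -- |m| ≥ 2
    obtain ⟨p, hpp, hpm⟩ := Int.exists_prime_and_dvd (show m.natAbs ≠ 1 by omega)
    set q := p.natAbs with hq
    have hqp : q.Prime := Int.prime_iff_natAbs_prime.mp hpp
    have hqm : (q : ℤ) ∣ m := (Int.natAbs_dvd).mpr hpm
    set v := (N.factorial).factorization q with hv
    have key : ∀ n ∈ Finset.Ico 1 (N+1),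
        ((q : ℤ))^(v+1) ∣ ((N.factorial / n.factorial : ℕ) : ℤ) * m ^ n := by
      intro n hn
      rw [Finset.mem_Ico] at hn
      obtain ⟨hn1, hn2⟩ := hn
      set w := (n.factorial).factorization q with hw
      have hw1 : w ≤ n - 1 := factorization_factorial_le hqp hn1
      have hwv : w ≤ v := by
        have hd : n.factorial ∣ N.factorial := Nat.factorial_dvd_factorial (by omega)
        have := (Nat.factorization_le_iff_dvd n.factorial_ne_zero N.factorial_ne_zero).mpr hd
        exact this q
      have hfd : q ^ (v - w) ∣ N.factorial / n.factorial := by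
        have hd : n.factorial ∣ N.factorial := Nat.factorial_dvd_factorial (by omega)
        have := Nat.ordProj_dvd (N.factorial / n.factorial) q
        rwa [Nat.factorization_div hd, Finsupp.tsub_apply, ← hv, ← hw] at this
      have h1 : ((q:ℤ)) ^ (v - w) ∣ ((N.factorial / n.factorial : ℕ) : ℤ) := by
        exact_mod_cast Int.natCast_dvd_natCast.mpr hfd
      have h2 : ((q:ℤ)) ^ n ∣ m ^ n := pow_dvd_pow_of_dvd hqm n
      have h3 : ((q:ℤ)) ^ (v - w + n) ∣ ((N.factorial / n.factorial : ℕ) : ℤ) * m ^ n := by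
        rw [pow_add]; exact mul_dvd_mul h1 h2
      exact dvd_trans (pow_dvd_pow _ (by omega)) h3
    have hdvdS : ((q : ℤ))^(v+1) ∣ ∑ n ∈ Finset.Ico 1 (N+1),
        ((N.factorial / n.factorial : ℕ) : ℤ) * m ^ n := Finset.dvd_sum key
    have hsplit : (Qpoly N).eval m = ((N.factorial : ℕ) : ℤ) + ∑ n ∈ Finset.Ico 1 (N+1),
        ((N.factorial / n.factorial : ℕ) : ℤ) * m ^ n := by
      rw [Qpoly_eval, Finset.range_eq_Ico, Finset.sum_eq_sum_Ico_succ_bot (by omega)]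
      simp
    rw [hsplit] at h0
    have hdvdN : ((q : ℤ))^(v+1) ∣ ((N.factorial : ℕ) : ℤ) := by
      have : ((N.factorial : ℕ) : ℤ) = -∑ n ∈ Finset.Ico 1 (N+1),
          ((N.factorial / n.factorial : ℕ) : ℤ) * m ^ n := by linarith
      rw [this]; exact hdvdS.neg_right
    have : q^(v+1) ∣ N.factorial := by exact_mod_cast hdvdN
    exact Nat.pow_succ_factorization_not_dvd N.factorial_ne_zero hqp this

lemma Qpoly_map_zmod {N : ℕ} (hN : 4 ≤ N) (hp : (N-1).Prime) :
    (Qpoly N).map (Int.castRingHom (ZMod (N-1))) = X^N + X^(N-1) := by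
  obtain ⟨p, rfl⟩ : ∃ p, N = p + 1 := ⟨N-1, by omega⟩
  simp only [Nat.add_sub_cancel] at *
  haveI : Fact p.Prime := ⟨hp⟩
  ext k
  rw [coeff_map, Qpoly_coeff, coeff_add, coeff_X_pow, coeff_X_pow]
  by_cases hk : k ≤ p + 1
  · rw [if_pos hk, map_natCast]
    by_cases hkN : k = p + 1
    · rw [hkN, Nat.div_self (p+1).factorial_pos, if_pos rfl, if_neg (by omega)]
      norm_num
    · by_cases hkN1 : k = p
      · have e : (p+1).factorial / k.factorial = p + 1 := by
          rw [hkN1, Nat.factorial_succ, Nat.mul_div_cancel _ p.factorial_pos]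
        rw [e, if_neg (by omega), if_pos hkN1]
        push_cast [ZMod.natCast_self]
        ring
      · have hdvd : p ∣ (p+1).factorial / k.factorial :=
          dvd_factorial_div (by omega) (by omega)
        rw [(ZMod.natCast_eq_zero_iff _ _).mpr hdvd, if_neg (by omega),
          if_neg hkN1]
        norm_num
  · rw [if_neg hk, if_neg (by omega), if_neg (by omega), map_zero]
    norm_num

lemma Qpoly_factor_natDegree_le {N : ℕ} (hN : 4 ≤ N) (hp : (N-1).Prime)
    {g h : Polynomial ℤ} (hh : h.Monic) (hmul : Qpoly N = g * h)
    (hh0 : ¬ ((N-1 : ℕ) : ℤ) ∣ h.coeff 0) : h.natDegree ≤ 1 := by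
  haveI : Fact (N-1).Prime := ⟨hp⟩
  set φ := Int.castRingHom (ZMod (N-1)) with hφ
  have hmap : g.map φ * h.map φ = X^N + X^(N-1) := by
    rw [← Polynomial.map_mul, ← hmul, Qpoly_map_zmod hN hp]
  have hXN : (X : (ZMod (N-1))[X])^N = X^(N-1) * X := by
    rw [← pow_succ, show N-1+1 = N by omega]
  have hdvd : h.map φ ∣ X^(N-1) * (X + 1) := by
    refine ⟨g.map φ, ?_⟩
    rw [mul_add, mul_one, ← hXN, ← hmap]; ring
  have hX : ¬ (X : (ZMod (N-1))[X]) ∣ h.map φ := by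
    rw [Polynomial.X_dvd_iff, coeff_map]
    intro hc
    exact hh0 ((ZMod.intCast_zmod_eq_zero_iff_dvd _ _).mp hc)
  have hcop : IsCoprime ((X : (ZMod (N-1))[X])^(N-1)) (h.map φ) :=
    ((Polynomial.irreducible_X.coprime_iff_not_dvd).mpr hX).pow_left
  have hdvd2 : h.map φ ∣ (X + 1) := hcop.symm.dvd_of_dvd_mul_left hdvd
  have hXne : ((X : (ZMod (N-1))[X]) + 1) ≠ 0 := by
    intro hc
    have := congrArg (fun q => Polynomial.coeff q 0) hc
    simp at this
  have hdeg := Polynomial.natDegree_le_of_dvd hdvd2 hXne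
  rw [show ((X : (ZMod (N-1))[X]) + 1) = X + C 1 by simp, natDegree_X_add_C] at hdeg
  rwa [hh.natDegree_map] at hdeg

lemma Qpoly_no_small_factor {N : ℕ} (hN : 4 ≤ N) {g h : Polynomial ℤ}
    (hg : g.Monic) (hmul : Qpoly N = g * h) (hd : g.natDegree ≤ 1)
    (hu : ¬ IsUnit g) : False := by
  rcases Nat.eq_or_lt_of_le hd with hd1 | hd0
  · -- degree 1 : integer root
    have hgeq : g = X + C (g.coeff 0) := by
      have := eq_X_add_C_of_degree_le_one (degree_le_of_natDegree_le hd)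
      rwa [show g.coeff 1 = 1 from ?_, map_one, one_mul] at this
      have h2 : g.coeff g.natDegree = 1 := hg
      rwa [hd1] at h2
    have : (Qpoly N).eval (-(g.coeff 0)) = 0 := by
      rw [hmul, eval_mul, hgeq]
      simp
    exact Qpoly_eval_ne_zero (by omega) _ this
  · have : g = 1 := hg.natDegree_eq_zero.mp (by omega)
    exact hu (this ▸ isUnit_one)

lemma Qpoly_irreducible {N : ℕ} (hN : 4 ≤ N) (hp : (N-1).Prime) :
    Irreducible (Qpoly N) := by
  constructor
  · intro hu
    have := Polynomial.natDegree_eq_zero_of_isUnit hu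
    rw [Qpoly_natDegree] at this; omega
  · intro a b hab
    by_contra hc
    push_neg at hc
    obtain ⟨ha, hb⟩ := hc
    have hlead : a.leadingCoeff * b.leadingCoeff = 1 := by
      rw [← leadingCoeff_mul, ← hab]; exact Qpoly_monic N
    -- normalize to monic factors
    have main : ∀ g h : Polynomial ℤ, g.Monic → h.Monic → Qpoly N = g * h →
        ¬ IsUnit g → ¬ IsUnit h → False := by
      intro g h hg hh hmul hgu hhu
      have hcoeff0 : g.coeff 0 * h.coeff 0 = (N.factorial : ℤ) := by
        have h1 : (Qpoly N).coeff 0 = ((N.factorial : ℕ) : ℤ) := by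
          rw [Qpoly_coeff, if_pos (by omega)]
          simp
        rw [hmul, mul_coeff_zero] at h1
        exact h1
      have hpd : ¬(((N-1:ℕ):ℤ) ∣ g.coeff 0 ∧ ((N-1:ℕ):ℤ) ∣ h.coeff 0) := by
        rintro ⟨h1, h2⟩
        have h3 : ((N-1:ℕ):ℤ) * ((N-1:ℕ):ℤ) ∣ (N.factorial : ℤ) :=
          hcoeff0 ▸ mul_dvd_mul h1 h2
        have h4 : (N-1)*(N-1) ∣ N.factorial := by exact_mod_cast h3
        exact sq_not_dvd_factorial hN hp h4
      rcases not_and_or.mp hpd with h1 | h1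
      · exact Qpoly_no_small_factor hN hg hmul
          (Qpoly_factor_natDegree_le hN hp hg (by rw [hmul, mul_comm]) h1) hgu
      · exact Qpoly_no_small_factor hN hh (by rw [hmul, mul_comm])
          (Qpoly_factor_natDegree_le hN hp hh hmul h1) hhu
    rcases Int.mul_eq_one_iff_eq_one_or_neg_one.mp hlead with ⟨ha1, hb1⟩ | ⟨ha1, hb1⟩
    · exact main a b ha1 hb1 hab ha hb
    · refine main (-a) (-b) ?_ ?_ (by rw [neg_mul_neg]; exact hab)
        (fun hu => ha (by simpa using hu.neg)) (fun hu => hb (by simpa using hu.neg))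
      · unfold Polynomial.Monic
        rw [leadingCoeff_neg, ha1]; norm_num
      · unfold Polynomial.Monic
        rw [leadingCoeff_neg, hb1]; norm_num

/-- If `N ≥ 4` and `N - 1` is prime, then `Q_N` is irreducible over `ℚ`. -/
theorem stmt_3 (N : ℕ) (hN : 4 ≤ N) (hp : (N - 1).Prime) :
    Irreducible ((Qpoly N).map (Int.castRingHom ℚ)) := by
  exact (Polynomial.IsPrimitive.Int.irreducible_iff_irreducible_map_cast
    (Qpoly_monic N).isPrimitive).mp (Qpoly_irreducible hN hp)
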